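/- arXiv:2107.11138 — 2 statements merged into one kernel-verified Lean document; each statement's English description precedes it below -/
import Mathlib

section
/- For all integers n ≥ t ≥ 2, wsat(K_n, K_{1,t}) = C(t,2) = t(t−1)/2. -/
open MeasureTheory Filter

namespace WsatRandom

/-- `G'` contains a subgraph isomorphic to `H` that contains the edge `e`. -/
def ContainsCopyWithEdge {V W : Type*} (G' : SimpleGraph V) (H : SimpleGraph W)
    (e : Sym2 V) : Prop :=
  ∃ f : W → V, Function.Injective f ∧ (∀ a b, H.Adj a b → G'.Adj (f a) (f b)) ∧
    ∃ a b, H.Adj a b ∧ e = s(f a, f b)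

/-- `F` is a weakly `(G,H)`-saturated spanning subgraph of `G`: there is an ordering
`e_1, …, e_m` of the edges of `G` not in `F` such that adding them one by one, each newly
added edge lies in a copy of `H`. -/
def WeaklySaturated {V W : Type*} (G F : SimpleGraph V) (H : SimpleGraph W) : Prop :=
  F ≤ G ∧ ∃ es : List (Sym2 V), es.Nodup ∧
    (∀ e, e ∈ es ↔ e ∈ G.edgeSet \ F.edgeSet) ∧
    ∀ i : Fin es.length,
      ContainsCopyWithEdge
        (F ⊔ SimpleGraph.fromEdgeSet {e | e ∈ es.take ((i : ℕ) + 1)}) H (es.get i)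

/-- The weak saturation number: the minimum number of edges of a weakly `(G,H)`-saturated
spanning subgraph of `G`. -/
noncomputable def wsat {V W : Type*} (G : SimpleGraph V) (H : SimpleGraph W) : ℕ :=
  sInf {m | ∃ F, WeaklySaturated G F H ∧ F.edgeSet.ncard = m}

/-- Minimum degree of a graph. -/
noncomputable def minDeg {W : Type*} (H : SimpleGraph W) : ℕ :=
  sInf {d | ∃ v, d = {u | H.Adj v u}.ncard}

/-- The Bernoulli(p) measure on `Bool`. -/
noncomputable def bernoulliMeasure (p : ℝ) : Measure Bool :=
  ENNReal.ofReal p • Measure.dirac true + ENNReal.ofReal (1 - p) • Measure.dirac false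

/-- The product Bernoulli(p) measure on edge-indicator functions; its pushforward under
`graphOf` is the Erdős–Rényi random graph `G(n,p)`. -/
noncomputable def edgeMeasure (n : ℕ) (p : ℝ) : Measure (Sym2 (Fin n) → Bool) :=
  Measure.pi fun _ => bernoulliMeasure p

/-- The graph on `[n]` determined by an edge-indicator function. -/
def graphOf {n : ℕ} (ω : Sym2 (Fin n) → Bool) : SimpleGraph (Fin n) :=
  SimpleGraph.fromEdgeSet {e | ω e = true}

/-- The star `K_{1,t}`. -/
def star (t : ℕ) : SimpleGraph (Fin 1 ⊕ Fin t) :=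
  completeBipartiteGraph (Fin 1) (Fin t)

/-!
Upper bound: a clique on `t` vertices is weakly saturated. First add the edges leaving the
clique: an edge `xy` with `x` in the clique completes a star at `x`. Then every remaining edge
`xy` completes a star at `x`, whose neighbourhood now contains the whole clique.

Lower bound: the centre of a star through a newly added edge had degree at least `t - 1`
before that edge was added. Call a vertex active from the first stage at which its degree
reaches `t - 1`, and list the vertices `v₀, v₁, …` by activation time. An added edge meets
`vⱼ` before `vⱼ` is active only if it is centred at its other endpoint, which is then active
earlier; so at its activation `vⱼ` has at least `t - 1 - j` neighbours later in the list, all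
joined to it by edges of `F`. Summing over `j < t` counts `C(t, 2)` distinct edges of `F`.
-/

open Finset SimpleGraph

theorem sum_card_filter_lt_adj_le_ncard_edgeSet {V : Type*} [Finite V] (F : SimpleGraph V)
    [DecidableRel F.Adj] {n : ℕ} {σ : Fin n → V} (hσ : σ.Injective) :
    ∑ j, #{k | j < k ∧ F.Adj (σ j) (σ k)} ≤ F.edgeSet.ncard := by
  rw [← Finset.card_sigma, ← Set.ncard_coe_finset]
  set P := univ.sigma fun j => ({k | j < k ∧ F.Adj (σ j) (σ k)} : Finset (Fin n))
  have hP (p) (hp : p ∈ (P : Set ((_ : Fin n) × Fin n))) :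
      p.1 < p.2 ∧ F.Adj (σ p.1) (σ p.2) := by
    simpa [P] using hp
  refine Set.ncard_le_ncard_of_injOn (fun p => s(σ p.1, σ p.2)) (fun p hp => (hP p hp).2) ?_
    (Set.toFinite _)
  rintro ⟨j, k⟩ hp ⟨j', k'⟩ hp' h
  rcases Sym2.eq_iff.1 h with ⟨h1, h2⟩ | ⟨h1, h2⟩
  · cases hσ h1; cases hσ h2; rfl
  · cases hσ h1; cases hσ h2; exact absurd ((hP _ hp).1.trans (hP _ hp').1) (lt_irrefl _)

theorem choose_two_eq_sum_sub {d n : ℕ} (hdn : d < n) :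
    (d + 1).choose 2 = ∑ j : Fin n, (d - j) := by
  have hreflect : ∑ j ∈ range (d + 1), (d - j) = ∑ j ∈ range (d + 1), j := by
    rw [← Finset.sum_range_reflect]
    exact Finset.sum_congr rfl fun j hj => by simp at hj; omega
  rw [Fin.sum_univ_eq_sum_range (fun j => d - j), ← Finset.sum_range_add_sum_Ico _ hdn,
    Finset.sum_eq_zero (s := Finset.Ico _ _) fun j hj => by simp at hj; omega, add_zero,
    hreflect, Finset.sum_range_id, Nat.choose_two_right, Nat.add_sub_cancel, mul_comm]

theorem ContainsCopyWithEdge.mono {V W : Type*} {G₁ G₂ : SimpleGraph V} {H : SimpleGraph W}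
    {e : Sym2 V} (hG : G₁ ≤ G₂) (h : ContainsCopyWithEdge G₁ H e) :
    ContainsCopyWithEdge G₂ H e :=
  let ⟨f, hf, hadj, hedge⟩ := h
  ⟨f, hf, fun a b hab => hG (hadj a b hab), hedge⟩

theorem star_adj_inl_inr {t : ℕ} (x : Fin 1) (y : Fin t) : (star t).Adj (.inl x) (.inr y) := by
  simp [star]

theorem ContainsCopyWithEdge.exists_center {V : Type*} [Finite V] {G : SimpleGraph V} {t : ℕ}
    {e : Sym2 V} (h : ContainsCopyWithEdge G (star t) e) :
    ∃ c w, e = s(c, w) ∧ G.Adj c w ∧ t ≤ (G.neighborSet c).ncard := by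
  obtain ⟨f, hf, hadj, a, b, hab, rfl⟩ := h
  have hdeg (x : Fin 1) : t ≤ (G.neighborSet (f (.inl x))).ncard :=
    calc t = (Set.range (f ∘ .inr)).ncard := by
          rw [Set.ncard_range_of_injective (hf.comp Sum.inr_injective), Nat.card_fin]
      _ ≤ _ := Set.ncard_le_ncard <| by
          rintro _ ⟨y, rfl⟩
          exact hadj _ _ (star_adj_inl_inr x y)
  rcases a with x | y <;> rcases b with x' | y'
  · simp [star] at hab
  · exact ⟨_, _, rfl, hadj _ _ (star_adj_inl_inr x y'), hdeg x⟩
  · exact ⟨_, _, Sym2.eq_swap, hadj _ _ (star_adj_inl_inr x' y), hdeg x'⟩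
  · simp [star] at hab

theorem containsCopyWithEdge_star {V : Type*} [Finite V] {G : SimpleGraph V} {t : ℕ}
    (ht : t ≠ 0) {c w : V} (hcw : G.Adj c w) (hdeg : t ≤ (G.neighborSet c).ncard) :
    ContainsCopyWithEdge G (star t) s(c, w) := by
  obtain ⟨u, hwu, huN, hcard⟩ := Set.exists_subsuperset_card_eq
    (Set.singleton_subset_iff.2 (show w ∈ G.neighborSet c from hcw))
    (by simpa [Nat.one_le_iff_ne_zero]) hdeg
  let g : u ≃ Fin t := Finite.equivFinOfCardEq (by rw [Nat.card_coe_set_eq, hcard])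
  have hu : ∀ v ∈ u, G.Adj c v := fun v hv => huN hv
  refine ⟨Sum.elim (fun _ => c) (fun j => g.symm j), ?_, ?_,
    .inl 0, .inr (g ⟨w, hwu rfl⟩), star_adj_inl_inr _ _, by simp⟩
  · refine (Function.injective_of_subsingleton _).sumElim
      (Subtype.val_injective.comp g.symm.injective) fun _ j h => ?_
    exact (hu _ (g.symm j).2).ne h
  · rintro (x | y) (x' | y') hab
    · simp [star] at hab
    · exact hu _ (g.symm y').2
    · exact (hu _ (g.symm y).2).symm
    · simp [star] at hab

section Stages

variable {V : Type*} (F : SimpleGraph V) (es : List (Sym2 V))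

def stage (i : ℕ) : SimpleGraph V :=
  F ⊔ fromEdgeSet {e | e ∈ es.take i}

theorem stage_succ {i : ℕ} (hi : i < es.length) :
    stage F es (i + 1) = stage F es i ⊔ fromEdgeSet {es[i]} := by
  ext u v
  simp only [stage, List.take_add_one, List.getElem?_eq_getElem hi, Option.toList_some,
    List.mem_append, List.mem_singleton, sup_adj, fromEdgeSet_adj, Set.mem_ofPred_eq,
    Set.mem_singleton_iff]
  tauto

theorem neighborSet_stage_succ_subset {i : ℕ} (hi : i < es.length) {c w : V}
    (he : es[i] = s(c, w)) :
    (stage F es (i + 1)).neighborSet c ⊆ insert w ((stage F es i).neighborSet c) := by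
  intro u hu
  rw [stage_succ F es hi, mem_neighborSet, sup_adj, fromEdgeSet_adj, he] at hu
  rcases hu with hu | ⟨hu, -⟩
  · exact Or.inr hu
  · exact Or.inl (Sym2.congr_right.1 (Set.mem_singleton_iff.1 hu))

theorem le_stage_length {G : SimpleGraph V}
    (hes : ∀ e ∈ G.edgeSet \ F.edgeSet, e ∈ es) : G ≤ stage F es es.length := by
  intro u v huv
  by_cases hF : F.Adj u v
  · exact Or.inl hF
  · refine Or.inr ⟨?_, huv.ne⟩
    rw [List.take_length]
    exact hes _ ⟨huv, hF⟩

variable (d : ℕ)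

noncomputable def stageDegree (i : ℕ) (v : V) : ℕ :=
  ((stage F es i).neighborSet v).ncard

def GrowsFromDegree : Prop :=
  ∀ i (hi : i < es.length), ∃ c w, es[i] = s(c, w) ∧ d ≤ stageDegree F es i c

noncomputable def activation (v : V) : ℕ :=
  sInf {i | d ≤ stageDegree F es i v}

variable {F es d}

theorem activation_le {i : ℕ} {v : V} (h : d ≤ stageDegree F es i v) :
    activation F es d v ≤ i :=
  Nat.sInf_le h

theorem stageDegree_lt_of_lt_activation {i : ℕ} {v : V} (h : i < activation F es d v) :
    stageDegree F es i v < d :=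
  not_le.1 (Nat.notMem_of_lt_sInf (s := {i | d ≤ stageDegree F es i v}) h)

theorem le_stageDegree_activation {v : V} (hv : ∃ i, d ≤ stageDegree F es i v) :
    d ≤ stageDegree F es (activation F es d v) v :=
  Nat.sInf_mem hv

theorem activation_lt_of_adj
    (hstep : GrowsFromDegree F es d) {u v : V} (hadj : (stage F es (activation F es d v)).Adj v u)
    (hF : ¬F.Adj v u) :
    activation F es d u < activation F es d v := by
  rw [stage, sup_adj, fromEdgeSet_adj] at hadj
  obtain ⟨i, hi, hes⟩ := List.mem_take_iff_getElem.1 (hadj.resolve_left hF).1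
  obtain ⟨c, w, hcw, hc⟩ := hstep i (hi.trans_le (min_le_right _ _))
  have hia : i < activation F es d v := hi.trans_le (min_le_left _ _)
  rcases Sym2.eq_iff.1 (hes.symm.trans hcw) with ⟨rfl, rfl⟩ | ⟨rfl, rfl⟩
  · exact absurd hc (stageDegree_lt_of_lt_activation hia).not_ge
  · exact (activation_le hc).trans_lt hia

theorem sub_le_card_filter_lt_adj [DecidableRel F.Adj] {n : ℕ}
    (hstep : GrowsFromDegree F es d) (hfinal : ∀ v, ∃ i, d ≤ stageDegree F es i v)
    (σ : Fin n ≃ V) (hσ : Monotone (activation F es d ∘ σ)) (j : Fin n) :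
    d - j ≤ #{k | j < k ∧ F.Adj (σ j) (σ k)} := by
  set B : Finset (Fin n) := {k | j < k ∧ F.Adj (σ j) (σ k)}
  have hN : (stage F es (activation F es d (σ j))).neighborSet (σ j) ⊆
      σ '' Set.Iio j ∪ σ '' B := by
    intro u hu
    obtain ⟨k, rfl⟩ := σ.surjective u
    rcases lt_trichotomy k j with hkj | rfl | hjk
    · exact Or.inl ⟨k, hkj, rfl⟩
    · exact (ne_of_adj _ (show (stage F es _).Adj _ _ from hu) rfl).elim
    · have hF : F.Adj (σ j) (σ k) := by
        by_contra hF
        exact (activation_lt_of_adj hstep hu hF).not_ge (hσ hjk.le)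
      exact Or.inr ⟨k, by simp [B, hjk, hF], rfl⟩
  calc d - j ≤ ((stage F es (activation F es d (σ j))).neighborSet (σ j)).ncard - j :=
        Nat.sub_le_sub_right (le_stageDegree_activation (hfinal (σ j))) _
    _ ≤ (σ '' Set.Iio j).ncard + (σ '' B).ncard - j :=
        Nat.sub_le_sub_right ((Set.ncard_le_ncard hN).trans (Set.ncard_union_le _ _)) _
    _ = #B := by
        rw [Set.ncard_image_of_injective _ σ.injective,
          Set.ncard_image_of_injective _ σ.injective, ← Finset.coe_Iio, Set.ncard_coe_finset,
          Set.ncard_coe_finset, Fin.card_Iio]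
        omega

theorem choose_two_le_ncard_edgeSet_of_growsFromDegree [Finite V]
    (hstep : GrowsFromDegree F es d) (hfinal : ∀ v, ∃ i, d ≤ stageDegree F es i v)
    (hd : d < Nat.card V) :
    (d + 1).choose 2 ≤ F.edgeSet.ncard := by
  classical
  let e := (Finite.equivFin V).symm
  let σ := (Tuple.sort (activation F es d ∘ e)).trans e
  calc (d + 1).choose 2 = ∑ j : Fin (Nat.card V), (d - j) := choose_two_eq_sum_sub hd
    _ ≤ ∑ j, #{k | j < k ∧ F.Adj (σ j) (σ k)} := Finset.sum_le_sum fun j _ =>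
        sub_le_card_filter_lt_adj hstep hfinal σ (Tuple.monotone_sort (activation F es d ∘ e)) j
    _ ≤ F.edgeSet.ncard := sum_card_filter_lt_adj_le_ncard_edgeSet F σ.injective

end Stages

theorem WeaklySaturated.choose_two_le_ncard_edgeSet {V : Type*} [Finite V] {F : SimpleGraph V}
    {t : ℕ} (hF : WeaklySaturated ⊤ F (star t)) (ht : t ≤ Nat.card V) :
    t.choose 2 ≤ F.edgeSet.ncard := by
  obtain ⟨-, es, -, hes, hcopy⟩ := hF
  rcases t with _ | d
  · simp
  refine choose_two_le_ncard_edgeSet_of_growsFromDegree (es := es) (fun i hi => ?_)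
    (fun v => ⟨es.length, ?_⟩) (by omega)
  · obtain ⟨c, w, hcw, -, hdeg⟩ := (hcopy ⟨i, hi⟩).exists_center
    refine ⟨c, w, hcw, ?_⟩
    change d + 1 ≤ ((stage F es (i + 1)).neighborSet c).ncard at hdeg
    have := (Set.ncard_le_ncard (neighborSet_stage_succ_subset F es hi hcw)).trans
      (Set.ncard_insert_le w ((stage F es i).neighborSet c))
    unfold stageDegree
    omega
  · have htop : stage F es es.length = ⊤ :=
      top_le_iff.1 (le_stage_length F es fun e he => (hes e).2 he)
    have := Set.ncard_add_ncard_compl {v}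
    rw [stageDegree, htop, neighborSet_top]
    simp only [Set.ncard_singleton] at this
    omega

theorem weaklySaturated_of_rank {V W : Type*} [Finite V] {G F : SimpleGraph V}
    {H : SimpleGraph W} (hFG : F ≤ G) (r : Sym2 V → ℕ)
    (hcopy : ∀ e ∈ G.edgeSet \ F.edgeSet, ContainsCopyWithEdge
      (F ⊔ fromEdgeSet (insert e {e' | e' ∈ G.edgeSet \ F.edgeSet ∧ r e' < r e})) H e) :
    WeaklySaturated G F H := by
  set M := G.edgeSet \ F.edgeSet
  let es := M.toFinite.toFinset.toList.mergeSort fun a b => r a ≤ r b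
  have hmem (e : Sym2 V) : e ∈ es ↔ e ∈ M := by simp [es, List.mem_mergeSort]
  have hsorted : es.Pairwise fun a b => r a ≤ r b := by
    simpa using List.pairwise_mergeSort (le := fun a b => r a ≤ r b)
      (fun _ _ _ => by simpa using le_trans) (fun a b => by simpa using le_total (r a) (r b)) _
  refine ⟨hFG, es, (List.mergeSort_perm _ _).nodup_iff.2 (Finset.nodup_toList _), hmem,
    fun i => (hcopy _ ((hmem _).1 (List.get_mem _ _))).mono (sup_le_sup_left
      (fromEdgeSet_mono ?_) _)⟩
  rintro e' (rfl | ⟨he', hlt⟩)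
  · exact List.mem_take_iff_getElem.2 ⟨i, by omega, rfl⟩
  · obtain ⟨j, hj, rfl⟩ := List.getElem_of_mem ((hmem e').2 he')
    have hji : j ≤ i := by
      by_contra hij
      exact (List.pairwise_iff_getElem.1 hsorted i j i.2 hj (by omega)).not_gt hlt
    exact List.mem_take_iff_getElem.2 ⟨j, by omega, rfl⟩

section Clique

variable {V : Type*} (s : Set V)

def cliqueOn : SimpleGraph V :=
  (⊤ : SimpleGraph s).map (Function.Embedding.subtype _)

variable {s}

@[simp]
theorem cliqueOn_adj {u v : V} : (cliqueOn s).Adj u v ↔ u ≠ v ∧ u ∈ s ∧ v ∈ s := by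
  rw [cliqueOn, map_adj]
  constructor
  · rintro ⟨u, v, huv, rfl, rfl⟩
    exact ⟨fun h => huv (Subtype.ext h), u.2, v.2⟩
  · rintro ⟨huv, hu, hv⟩
    exact ⟨⟨u, hu⟩, ⟨v, hv⟩, fun h => huv (congrArg Subtype.val h), rfl, rfl⟩

theorem ncard_edgeSet_cliqueOn [Finite s] : (cliqueOn s).edgeSet.ncard = s.ncard.choose 2 := by
  classical
  have := Fintype.ofFinite s
  rw [cliqueOn, edgeSet_map, Set.ncard_image_of_injective _ (Function.Embedding.injective _),
    ← coe_edgeFinset, Set.ncard_coe_finset, card_edgeFinset_top_eq_card_choose_two,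
    ← Nat.card_eq_fintype_card, Nat.card_coe_set_eq]

theorem weaklySaturated_top_cliqueOn_star [Finite V] {t : ℕ} (hs : s.ncard = t) (ht : t ≠ 0) :
    WeaklySaturated ⊤ (cliqueOn s) (star t) := by
  classical
  set M := (⊤ : SimpleGraph V).edgeSet \ (cliqueOn s).edgeSet
  have hM (x y : V) : s(x, y) ∈ M ↔ x ≠ y ∧ ¬(x ∈ s ∧ y ∈ s) := by
    simp only [M, Set.mem_sdiff, mem_edgeSet, top_adj, cliqueOn_adj]
    tauto
  let r : Sym2 V → ℕ := fun e => if ∀ v ∈ e, v ∉ s then 1 else 0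
  have hcopy (x y : V) (hxy : s(x, y) ∈ M) (hy : y ∉ s) : ContainsCopyWithEdge
      (cliqueOn s ⊔ fromEdgeSet (insert s(x, y) {e' | e' ∈ M ∧ r e' < r s(x, y)})) (star t)
      s(x, y) := by
    have hnbr : insert y (s \ {x}) ⊆ (cliqueOn s ⊔
        fromEdgeSet (insert s(x, y) {e' | e' ∈ M ∧ r e' < r s(x, y)})).neighborSet x := by
      rintro v (rfl | ⟨hv, hvx⟩)
      · exact Or.inr ((fromEdgeSet_adj _).2 ⟨Set.mem_insert _ _, ((hM x v).1 hxy).1⟩)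
      by_cases hx : x ∈ s
      · exact Or.inl (cliqueOn_adj.2 ⟨Ne.symm hvx, hx, hv⟩)
      · refine Or.inr ((fromEdgeSet_adj _).2
          ⟨Or.inr ⟨(hM x v).2 ⟨Ne.symm hvx, fun h => hx h.1⟩, ?_⟩, Ne.symm hvx⟩)
        simp [r, hv, hx, hy]
    have hcard : t ≤ (insert y (s \ {x})).ncard := by
      rw [Set.ncard_insert_of_notMem fun h => hy h.1]
      by_cases hx : x ∈ s
      · rw [Set.ncard_sdiff_singleton_of_mem hx]
        omega
      · rw [Set.sdiff_singleton_eq_self hx]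
        omega
    exact containsCopyWithEdge_star ht (hnbr (Set.mem_insert _ _))
      (hcard.trans (Set.ncard_le_ncard hnbr))
  refine weaklySaturated_of_rank le_top r fun e he => ?_
  induction e using Sym2.ind with
  | h x y =>
    by_cases hy : y ∈ s
    · have hx : x ∉ s := fun hx => ((hM x y).1 he).2 ⟨hx, hy⟩
      rw [Sym2.eq_swap] at he ⊢
      exact hcopy y x he hx
    · exact hcopy x y he hy

end Clique

/-- `wsat(K_n, K_{1,t}) = C(t,2) = t(t-1)/2` for `n ≥ t ≥ 2`. -/
theorem stmt_9 (n t : ℕ) (ht : 2 ≤ t) (hn : t ≤ n) :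
    wsat (⊤ : SimpleGraph (Fin n)) (star t) = Nat.choose t 2 ∧
      Nat.choose t 2 = t * (t - 1) / 2 := by
  obtain ⟨s, -, hs⟩ :=
    Set.exists_subset_card_eq (s := (Set.univ : Set (Fin n))) (by simpa using hn)
  have hF := weaklySaturated_top_cliqueOn_star hs (by omega)
  have hmem : t.choose 2 ∈ {m | ∃ F, WeaklySaturated ⊤ F (star t) ∧ F.edgeSet.ncard = m} :=
    ⟨cliqueOn s, hF, hs ▸ ncard_edgeSet_cliqueOn⟩
  refine ⟨le_antisymm (Nat.sInf_le hmem) (le_csInf ⟨_, hmem⟩ ?_), Nat.choose_two_right t⟩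
  rintro _ ⟨F, hF, rfl⟩
  exact hF.choose_two_le_ncard_edgeSet (by simpa using hn)
end WsatRandom
end

section
/- Let t ≥ 3 be an integer and set p(n,t) = n^{−1/(t−1)} (ln n)^{−(t−2)/(t−1)}. There exists c > 0 such that for every sequence p_n ∈ (0,1) with p_n < c · p(n,t) for all sufficiently large n, with high probability G(n,p_n) contains no saturating structure (with parameter t) of length ⌊ln n⌋ whose core has size at most C(t+1,2). -/
open MeasureTheory Filter

namespace WsatRandom

/-- The threshold function `p(n,t) = n^{-1/(t-1)} (ln n)^{-(t-2)/(t-1)}`. -/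
noncomputable def pnt (n t : ℕ) : ℝ :=
  (n : ℝ) ^ (-(1 : ℝ) / ((t : ℝ) - 1)) * (Real.log n) ^ (-(((t : ℝ) - 2) / ((t : ℝ) - 1)))

/-- `F` together with the vertex ordering `v : Fin x → V` is a saturating structure
(with parameter `t`) of length `x` and core size `y` in `G`: `t ≤ y < x`, `F` is a subgraph
of `G` with all edges among the listed vertices, and every vertex `v i` with `y ≤ i` has
exactly `t-1` neighbors in `F` among the previous vertices. -/
def IsSaturatingStructure {V : Type*} (G : SimpleGraph V) (t x y : ℕ)
    (F : SimpleGraph V) (v : Fin x → V) : Prop :=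
  t ≤ y ∧ y < x ∧ F ≤ G ∧ Function.Injective v ∧
    (∀ a b : V, F.Adj a b → a ∈ Set.range v ∧ b ∈ Set.range v) ∧
    ∀ i : Fin x, y ≤ (i : ℕ) →
      {j : Fin x | (j : ℕ) < (i : ℕ) ∧ F.Adj (v i) (v j)}.ncard = t - 1

/-
A saturating structure of length `x` whose core has at most `C` vertices spans `x` vertices and
at least `(t - 1) (x - C)` edges: each vertex after the core sends `t - 1` edges back. A union
bound over `x`-sets of vertices and `m`-sets of edges inside them, `m = (t - 1) (x - C)`, bounds
the probability of such a structure by `C(n, x) C(x², m) p^m`. Below `c · p(n,t)` we have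
`p^(t-1) ≤ c^(t-1) / (n (ln n)^(t-2))`, so every vertex outside the core pays a factor `1/n`
against the `n^x` ways of choosing the vertices, and the logarithms pay for `C(x², m)`. With
`x = ⌊ln n⌋` what is left is at most `e^(-x) → 0`.
-/

open Finset Real

section EdgeMeasure

variable {p : ℝ}

lemma bernoulliMeasure_univ (hp0 : 0 ≤ p) (hp1 : p ≤ 1) : bernoulliMeasure p Set.univ = 1 := by
  simp [bernoulliMeasure, ← ENNReal.ofReal_add hp0 (sub_nonneg.2 hp1)]

lemma bernoulliMeasure_singleton_true : bernoulliMeasure p {true} = ENNReal.ofReal p := by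
  simp [bernoulliMeasure]

instance : IsFiniteMeasure (bernoulliMeasure p) := by
  constructor; simp [bernoulliMeasure]

lemma isProbabilityMeasure_edgeMeasure (n : ℕ) (hp0 : 0 ≤ p) (hp1 : p ≤ 1) :
    IsProbabilityMeasure (edgeMeasure n p) :=
  have : IsProbabilityMeasure (bernoulliMeasure p) := ⟨bernoulliMeasure_univ hp0 hp1⟩
  Measure.pi.instIsProbabilityMeasure _

lemma edgeMeasure_forall_eq_true (n : ℕ) (hp0 : 0 ≤ p) (hp1 : p ≤ 1) (E : Finset (Sym2 (Fin n))) :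
    edgeMeasure n p {ω | ∀ e ∈ E, ω e = true} = ENNReal.ofReal p ^ #E := by
  have hcyl : {ω : Sym2 (Fin n) → Bool | ∀ e ∈ E, ω e = true}
      = Set.univ.pi fun e => if e ∈ E then {true} else Set.univ := by
    ext ω
    simp only [Set.mem_ofPred_eq, Set.mem_pi, Set.mem_univ, true_imp_iff]
    exact forall_congr' fun e => by by_cases he : e ∈ E <;> simp [he]
  rw [edgeMeasure, hcyl, Measure.pi_pi]
  simp only [apply_ite (bernoulliMeasure p), bernoulliMeasure_singleton_true,
    bernoulliMeasure_univ hp0 hp1, prod_ite_mem, univ_inter, prod_const]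

lemma edgeMeasure_exists_forall_eq_true_le (n m : ℕ) (hp0 : 0 ≤ p) (hp1 : p ≤ 1)
    (𝓔 : Finset (Finset (Sym2 (Fin n)))) (h𝓔 : ∀ E ∈ 𝓔, #E = m) :
    edgeMeasure n p {ω | ∃ E ∈ 𝓔, ∀ e ∈ E, ω e = true} ≤ #𝓔 * ENNReal.ofReal p ^ m := by
  have hunion : {ω : Sym2 (Fin n) → Bool | ∃ E ∈ 𝓔, ∀ e ∈ E, ω e = true}
      = ⋃ E ∈ 𝓔, {ω | ∀ e ∈ E, ω e = true} := by
    ext ω; simp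
  calc edgeMeasure n p {ω | ∃ E ∈ 𝓔, ∀ e ∈ E, ω e = true}
      ≤ ∑ E ∈ 𝓔, edgeMeasure n p {ω | ∀ e ∈ E, ω e = true} :=
        hunion ▸ measure_biUnion_finset_le _ _
    _ = #𝓔 * ENNReal.ofReal p ^ m := by
        rw [sum_congr rfl fun E hE => by rw [edgeMeasure_forall_eq_true n hp0 hp1, h𝓔 E hE],
          sum_const, nsmul_eq_mul]

end EdgeMeasure

section SaturatingStructure

variable {V : Type*} [DecidableEq V]

variable (V) in
def spannedEdgeSets [Fintype V] (x m : ℕ) : Finset (Finset (Sym2 V)) :=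
  (univ.powersetCard x).biUnion fun S => S.sym2.powersetCard m

lemma card_of_mem_spannedEdgeSets [Fintype V] {x m : ℕ} {E : Finset (Sym2 V)}
    (hE : E ∈ spannedEdgeSets V x m) : #E = m := by
  obtain ⟨S, -, hES⟩ := mem_biUnion.1 hE
  exact (mem_powersetCard.1 hES).2

lemma card_spannedEdgeSets_le [Fintype V] (x m : ℕ) :
    #(spannedEdgeSets V x m) ≤ (Fintype.card V).choose x * (x * x).choose m := by
  have hsym2 : ∀ S ∈ (univ : Finset V).powersetCard x,
      #(S.sym2.powersetCard m) ≤ (x * x).choose m := by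
    intro S hS
    rw [card_powersetCard, card_sym2, (mem_powersetCard.1 hS).2]
    exact Nat.choose_le_choose m (by
      rw [Nat.choose_two_right, Nat.add_sub_cancel]; exact Nat.div_le_of_le_mul (by nlinarith))
  calc #(spannedEdgeSets V x m) ≤ ∑ S ∈ univ.powersetCard x, #(S.sym2.powersetCard m) :=
        card_biUnion_le
    _ ≤ _ := by
        grw [sum_le_sum hsym2, sum_const, card_powersetCard, card_univ, smul_eq_mul]

lemma sum_card_backNeighbors_le {x : ℕ} (H : SimpleGraph V) [DecidableRel H.Adj] {v : Fin x → V}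
    (hv : Function.Injective v) :
    ∑ i, #{j | j < i ∧ H.Adj (v i) (v j)} ≤ #{e ∈ (univ.image v).sym2 | e ∈ H.edgeSet} := by
  set D : Finset (Fin x × Fin x) := {q | q.2 < q.1 ∧ H.Adj (v q.1) (v q.2)}
  have hD : ∑ i, #{j | j < i ∧ H.Adj (v i) (v j)} = #D := by
    simp only [D, card_filter, Fintype.sum_prod_type]
  rw [hD]
  refine card_le_card_of_injOn (fun q => s(v q.1, v q.2)) ?_ ?_
  · intro q hq
    simp only [D, coe_filter, Set.mem_ofPred_eq, mem_univ, true_and] at hq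
    simp [hq.2]
  · rintro ⟨i, j⟩ hq ⟨i', j'⟩ hq' h
    simp only [D, coe_filter, Set.mem_ofPred_eq, mem_univ, true_and] at hq hq'
    rcases Sym2.eq_iff.1 h with ⟨h1, h2⟩ | ⟨h1, h2⟩
    · cases hv h1; cases hv h2; rfl
    · cases hv h1; cases hv h2
      exact absurd hq.1 (lt_asymm hq'.1)

lemma IsSaturatingStructure.exists_mem_spannedEdgeSets [Fintype V] {G F : SimpleGraph V}
    {t x y C : ℕ} {v : Fin x → V} (hs : IsSaturatingStructure G t x y F v) (hy : y ≤ C) :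
    ∃ E ∈ spannedEdgeSets V x ((t - 1) * (x - C)), ∀ e ∈ E, e ∈ G.edgeSet := by
  classical
  obtain ⟨-, -, hFG, hv, -, hback⟩ := hs
  have hback' : ∀ i : Fin x, y ≤ (i : ℕ) → #{j | j < i ∧ F.Adj (v i) (v j)} = t - 1 := by
    intro i hi
    rw [← hback i hi, ← Set.ncard_coe_finset, coe_filter]
    simp only [mem_univ, true_and]
    rfl
  have hlate : #({i | y ≤ (i : ℕ)} : Finset (Fin x)) = x - y := by
    have := card_filter_add_card_filter_not (s := univ) (fun i : Fin x => (i : ℕ) < y)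
    simp only [Fin.card_filter_val_lt, not_lt, card_univ, Fintype.card_fin] at this
    omega
  set late : Finset (Fin x) := {i | y ≤ (i : ℕ)}
  have hcount : (t - 1) * (x - C) ≤ #{e ∈ (univ.image v).sym2 | e ∈ G.edgeSet} :=
    calc (t - 1) * (x - C) ≤ ∑ i ∈ late, (t - 1) := by
          rw [sum_const, hlate, smul_eq_mul, mul_comm]; gcongr
      _ = ∑ i ∈ late, #{j | j < i ∧ F.Adj (v i) (v j)} :=
          sum_congr rfl fun i hi => (hback' i (mem_filter.1 hi).2).symm
      _ ≤ ∑ i, #{j | j < i ∧ F.Adj (v i) (v j)} := sum_le_sum_of_subset (filter_subset _ _)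
      _ ≤ #{e ∈ (univ.image v).sym2 | e ∈ F.edgeSet} := sum_card_backNeighbors_le F hv
      _ ≤ #{e ∈ (univ.image v).sym2 | e ∈ G.edgeSet} :=
          card_le_card (monotone_filter_right _ fun _ _ he => SimpleGraph.edgeSet_mono hFG he)
  obtain ⟨E, hEsub, hEcard⟩ := exists_subset_card_eq hcount
  refine ⟨E, mem_biUnion.2 ⟨univ.image v, ?_, mem_powersetCard.2 ⟨?_, hEcard⟩⟩, ?_⟩
  · exact mem_powersetCard.2 ⟨subset_univ _, card_image_of_injective _ hv ▸ card_fin x⟩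
  · exact hEsub.trans (filter_subset _ _)
  · exact fun e he => (mem_filter.1 (hEsub he)).2

end SaturatingStructure

lemma choose_le_exp_mul_div_pow (N k : ℕ) : (N.choose k : ℝ) ≤ (exp 1 * N / k) ^ k := by
  rcases Nat.eq_zero_or_pos k with rfl | hk0
  · simp
  have hk : (k : ℝ) ^ k ≤ exp k * k.factorial := by
    have := pow_div_factorial_le_exp _ (Nat.cast_nonneg k) k
    rwa [div_le_iff₀ (by positivity)] at this
  calc (N.choose k : ℝ) ≤ N ^ k / k.factorial := Nat.choose_le_pow_div k N
    _ ≤ (exp 1 * N / k) ^ k := by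
        rw [div_le_iff₀ (by positivity), div_pow, mul_pow, exp_one_pow, div_mul_eq_mul_div,
          le_div_iff₀ (by positivity)]
        calc (N : ℝ) ^ k * k ^ k ≤ N ^ k * (exp k * k.factorial) := by gcongr
          _ = _ := by ring

lemma pnt_pow_sub_one (n : ℕ) {t : ℕ} (ht : 2 ≤ t) :
    pnt n t ^ (t - 1) = ((n : ℝ) * log n ^ (t - 2))⁻¹ := by
  have hlog : 0 ≤ log n := log_natCast_nonneg n
  have ht1 : (t : ℝ) - 1 ≠ 0 := by
    have : (2 : ℝ) ≤ t := by exact_mod_cast ht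
    linarith
  have hcast1 : ((t - 1 : ℕ) : ℝ) = t - 1 := by push_cast [show 1 ≤ t by omega]; ring
  have hcast2 : ((t - 2 : ℕ) : ℝ) = t - 2 := by push_cast [ht]; ring
  rw [pnt, mul_pow, ← rpow_natCast, ← rpow_natCast, ← rpow_mul (Nat.cast_nonneg n),
    ← rpow_mul hlog, hcast1, div_mul_cancel₀ _ ht1, neg_mul, div_mul_cancel₀ _ ht1,
    rpow_neg_one, rpow_neg hlog, ← hcast2, rpow_natCast, mul_inv]

lemma choose_mul_choose_mul_pow_le_exp {n t x C : ℕ} {p L : ℝ} (ht : 3 ≤ t) (hCx : 2 * C ≤ x)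
    (hx : 0 < x) (hL : 1 ≤ L) (hxL : (x : ℝ) ≤ L) (hn : 0 < n) (hnx : (n : ℝ) ≤ exp (x + 1))
    (hp0 : 0 ≤ p) (hp : p ^ (t - 1) ≤ exp (-C - 5) ^ (t - 1) * ((n : ℝ) * L ^ (t - 2))⁻¹) :
    (n.choose x : ℝ) * (x * x).choose ((t - 1) * (x - C)) * p ^ ((t - 1) * (x - C))
      ≤ exp (-x) := by
  obtain ⟨d, rfl⟩ : ∃ d, x = C + d := ⟨x - C, by omega⟩
  obtain ⟨k, hk⟩ : ∃ k, (t - 2) * d = C + k :=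
    ⟨(t - 2) * d - C, by have := Nat.le_mul_of_pos_left d (by omega : 0 < t - 2); omega⟩
  have hm : (t - 1) * d = C + d + k := by
    rw [show t - 1 = t - 2 + 1 by omega, Nat.succ_mul, hk]; ring
  rw [Nat.add_sub_cancel_left, hm]
  set x := C + d with hx_def
  set m := x + k
  have hA : (n.choose x : ℝ) ≤ (exp 1 * n / x) ^ x := choose_le_exp_mul_div_pow n x
  have hB : ((x * x).choose m : ℝ) ≤ (exp 1 * x) ^ m := by
    refine (choose_le_exp_mul_div_pow _ m).trans (pow_le_pow_left₀ (by positivity) ?_ m)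
    rw [div_le_iff₀ (by positivity), Nat.cast_mul, mul_assoc]
    gcongr
    exact_mod_cast Nat.le_add_right x k
  have hP : p ^ m ≤ exp (-C - 5) ^ m * ((n : ℝ) ^ d * L ^ (C + k))⁻¹ := by
    calc p ^ m = (p ^ (t - 1)) ^ d := by rw [← pow_mul, hm]
      _ ≤ (exp (-C - 5) ^ (t - 1) * ((n : ℝ) * L ^ (t - 2))⁻¹) ^ d := by gcongr
      _ = _ := by
        rw [mul_pow, ← pow_mul, inv_pow, mul_pow, ← pow_mul, hk]
        congr 2
  calc (n.choose x : ℝ) * (x * x).choose m * p ^ m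
      ≤ (exp 1 * n / x) ^ x * (exp 1 * x) ^ m
          * (exp (-C - 5) ^ m * ((n : ℝ) ^ d * L ^ (C + k))⁻¹) := by
        gcongr
    _ = (n : ℝ) ^ C * exp x * exp (-C - 4) ^ m * (x ^ k / L ^ (C + k)) := by
        have he : exp (-C - 4) = exp 1 * exp (-C - 5) := by rw [← exp_add]; ring_nf
        have hnx : (n : ℝ) ^ x = n ^ C * n ^ d := by rw [hx_def, pow_add]
        have hx0 : (x : ℝ) ≠ 0 := by positivity
        rw [he, ← exp_one_pow, mul_pow, div_pow, mul_pow, mul_pow, hnx, show m = x + k from rfl,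
          pow_add (x : ℝ) x k]
        field_simp
    -- `e · exp (-C - 5) = exp (-C - 4)` is small enough to absorb `exp x` and
    -- `n ^ C ≤ exp ((x + 1) C)`.
    _ ≤ exp ((x + 1) * C) * exp x * exp (-C - 4) ^ x * 1 := by
        have hnC : (n : ℝ) ^ C ≤ exp ((x + 1) * C) := by
          rw [mul_comm, exp_nat_mul]; gcongr
        have hdecay : exp (-C - 4) ^ m ≤ exp (-C - 4) ^ x :=
          pow_le_pow_of_le_one (exp_pos _).le (exp_le_one_iff.2 (by linarith))
            (Nat.le_add_right x k)
        have hxk : (x : ℝ) ^ k / L ^ (C + k) ≤ 1 := by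
          rw [div_le_one (by positivity)]
          calc (x : ℝ) ^ k ≤ L ^ k := by gcongr
            _ ≤ L ^ (C + k) := pow_le_pow_right₀ hL (Nat.le_add_left k C)
        gcongr
    _ ≤ exp (-x) := by
        have hCx' : (C : ℝ) ≤ 2 * x := by exact_mod_cast (by omega : C ≤ 2 * x)
        rw [mul_one, ← exp_nat_mul, ← exp_add, ← exp_add, exp_le_exp]
        nlinarith

lemma edgeMeasure_saturatingStructure_le {n t x C : ℕ} {p : ℝ} (hp0 : 0 ≤ p) (hp1 : p ≤ 1) :
    edgeMeasure n p {ω | ∃ (y : ℕ) (F : SimpleGraph (Fin n)) (v : Fin x → Fin n),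
        y ≤ C ∧ IsSaturatingStructure (graphOf ω) t x y F v}
      ≤ ENNReal.ofReal
          ((n.choose x : ℝ) * (x * x).choose ((t - 1) * (x - C)) * p ^ ((t - 1) * (x - C))) := by
  set m := (t - 1) * (x - C)
  have hsub : {ω : Sym2 (Fin n) → Bool | ∃ (y : ℕ) (F : SimpleGraph (Fin n)) (v : Fin x → Fin n),
        y ≤ C ∧ IsSaturatingStructure (graphOf ω) t x y F v}
      ⊆ {ω | ∃ E ∈ spannedEdgeSets (Fin n) x m, ∀ e ∈ E, ω e = true} := by
    rintro ω ⟨y, F, v, hy, hs⟩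
    obtain ⟨E, hE, hEG⟩ := hs.exists_mem_spannedEdgeSets hy
    refine ⟨E, hE, fun e he => ?_⟩
    have := hEG e he
    rw [graphOf, SimpleGraph.edgeSet_fromEdgeSet] at this
    exact this.1
  calc _ ≤ _ := measure_mono hsub
    _ ≤ #(spannedEdgeSets (Fin n) x m) * ENNReal.ofReal p ^ m :=
        edgeMeasure_exists_forall_eq_true_le n m hp0 hp1 _ fun _ => card_of_mem_spannedEdgeSets
    _ ≤ ((n.choose x * (x * x).choose m : ℕ) : ENNReal) * ENNReal.ofReal p ^ m := by
        gcongr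
        simpa using card_spannedEdgeSets_le (V := Fin n) x m
    _ = _ := by
        rw [ENNReal.ofReal_mul (by positivity), ← ENNReal.ofReal_pow hp0, ← ENNReal.ofReal_natCast]
        push_cast
        rfl

lemma edgeMeasure_saturatingStructure_le_exp {n t C : ℕ} {p : ℝ} (ht : 3 ≤ t)
    (hn : 2 * C + 1 ≤ log n) (hp0 : 0 ≤ p) (hp1 : p ≤ 1) (hpc : p ≤ exp (-C - 5) * pnt n t) :
    edgeMeasure n p {ω | ∃ (y : ℕ) (F : SimpleGraph (Fin n)) (v : Fin ⌊log n⌋₊ → Fin n),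
        y ≤ C ∧ IsSaturatingStructure (graphOf ω) t ⌊log n⌋₊ y F v}
      ≤ ENNReal.ofReal (exp (-⌊log n⌋₊)) := by
  have hlog : 0 < log n := by have : (0 : ℝ) ≤ C := C.cast_nonneg; linarith
  have hn0 : 0 < n := Nat.pos_of_ne_zero fun h => by simp [h] at hlog
  have hx : 2 * C + 1 ≤ ⌊log n⌋₊ := Nat.le_floor (by exact_mod_cast hn)
  refine (edgeMeasure_saturatingStructure_le hp0 hp1).trans (ENNReal.ofReal_le_ofReal ?_)
  refine choose_mul_choose_mul_pow_le_exp ht (by omega) (by omega) (by linarith)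
    (Nat.floor_le hlog.le) hn0 ?_ hp0 ?_
  · calc (n : ℝ) = exp (log n) := (exp_log (by exact_mod_cast hn0)).symm
      _ ≤ exp (⌊log n⌋₊ + 1) := exp_le_exp.2 (Nat.lt_floor_add_one _).le
  · calc p ^ (t - 1) ≤ (exp (-C - 5) * pnt n t) ^ (t - 1) := by gcongr
      _ = _ := by rw [mul_pow, pnt_pow_sub_one n (by omega)]

lemma tendsto_prob_compl_nhds_one {Ω : ℕ → Type*} [∀ n, MeasurableSpace (Ω n)]
    {μ : ∀ n, Measure (Ω n)} [∀ n, IsProbabilityMeasure (μ n)] {s : ∀ n, Set (Ω n)}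
    (hs : ∀ n, MeasurableSet (s n)) (h : Tendsto (fun n => μ n (s n)) atTop (nhds 0)) :
    Tendsto (fun n => μ n (s n)ᶜ) atTop (nhds 1) := by
  simp_rw [prob_compl_eq_one_sub (hs _)]
  simpa using ENNReal.Tendsto.sub tendsto_const_nhds h (Or.inl ENNReal.one_ne_top)

/-- below the threshold, whp `G(n,p_n)` contains no saturating structure of
length `⌊ln n⌋` whose core has size at most `C(t+1,2)`. -/
theorem stmt_15 (t : ℕ) (ht : 3 ≤ t) :
    ∃ c : ℝ, 0 < c ∧ ∀ p : ℕ → ℝ,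
      (∀ n : ℕ, p n ∈ Set.Ioo (0 : ℝ) 1) →
      (∀ᶠ n : ℕ in atTop, p n < c * pnt n t) →
      Tendsto (fun n : ℕ => edgeMeasure n (p n)
          {ω | ¬ ∃ (y : ℕ) (F : SimpleGraph (Fin n))
              (v : Fin ⌊Real.log n⌋₊ → Fin n),
            y ≤ Nat.choose (t + 1) 2 ∧
            IsSaturatingStructure (graphOf ω) t ⌊Real.log n⌋₊ y F v})
        atTop (nhds (1 : ENNReal)) := by
  set C := Nat.choose (t + 1) 2
  refine ⟨exp (-C - 5), exp_pos _, fun p hp hpc => ?_⟩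
  have := fun n => isProbabilityMeasure_edgeMeasure n (hp n).1.le (hp n).2.le
  refine tendsto_prob_compl_nhds_one (fun _ => MeasurableSet.of_discrete) ?_
  have hlog : Tendsto (fun n : ℕ => log n) atTop atTop :=
    tendsto_log_atTop.comp tendsto_natCast_atTop_atTop
  have hdecay : Tendsto (fun n : ℕ => ENNReal.ofReal (exp (-⌊log n⌋₊))) atTop (nhds 0) := by
    simpa using ENNReal.tendsto_ofReal (tendsto_exp_atBot.comp (tendsto_neg_atTop_atBot.comp
      (tendsto_natCast_atTop_atTop.comp (tendsto_nat_floor_atTop.comp hlog))))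
  refine tendsto_of_tendsto_of_tendsto_of_le_of_le' tendsto_const_nhds hdecay
    (Eventually.of_forall fun _ => zero_le) ?_
  filter_upwards [hpc, hlog.eventually_ge_atTop (2 * C + 1)] with n hpcn hn
  exact edgeMeasure_saturatingStructure_le_exp ht hn (hp n).1.le (hp n).2.le hpcn.le
end WsatRandom
end
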